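/- Let f ∈ C²(R_+^{n+1}) and suppose ∇f(x₀) ≠ 0 at some point x₀ ∈ R_+^{n+1}. Then there exist constants C > 0, ε > 0 and N > 0 such that for every k > N and every dyadic cube Q of sidelength 2^{−k} whose center lies within distance ε of x₀, the subcubes A_Q, B_Q (chosen with signs a_{Q,j} = sgn(∂_{x_j}f)(c_Q) so that a_{Q,j}(x_j − y_j) ≥ 2^{−k−1} for x ∈ A_Q, y ∈ B_Q) satisfy the average-oscillation lower bound ⨍_{A_Q} |f(x) − (f)_{B_Q}| dm_λ(x) ≥ C 2^{−k} |∇f(x₀)|, where (f)_{B_Q} denotes the m_λ-average of f over B_Q. -/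

import Mathlib

/-!
If `‖Df(z) - Df(x₀)‖ ≤ δ` on a ball around `x₀`, the mean value inequality gives
`f x - f y ≥ Df(c_Q)(x - y) - 2δ‖x - y‖` for `x, y` in a small cube `Q` there. The signs
`a_{Q,j} = sgn ∂_j f(c_Q)` make every coordinate of `Df(c_Q)(x - y)` nonnegative, so this linear
term is at least `2^{-k-1} ∑ⱼ |∂_j f(c_Q)| ≥ 2^{-k-1} ‖Df(c_Q)‖`. With `δ = ‖Df(x₀)‖ / 16` we get
`f x - f y ≥ 2^{-k} ‖Df(x₀)‖ / 4` for all `x ∈ A_Q`, `y ∈ B_Q`, and this pointwise gap survives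
averaging, because the subcubes lie in the open half space where `m_λ` is finite and positive on
cubes.
-/

open MeasureTheory ENNReal

noncomputable def besselMeasurePi (n : ℕ) (lam : ℝ) : Measure (Fin (n + 1) → ℝ) :=
  ((volume : Measure (Fin (n + 1) → ℝ)).restrict {x | 0 < x (Fin.last n)}).withDensity
    fun x => ENNReal.ofReal (x (Fin.last n) ^ (2 * lam))

def dyadicCube (n : ℕ) (k : ℤ) (m : Fin (n + 1) → ℤ) : Set (Fin (n + 1) → ℝ) :=
  {x | ∀ j, (m j : ℝ) * 2 ^ (-k) ≤ x j ∧ x j ≤ ((m j : ℝ) + 1) * 2 ^ (-k)}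

noncomputable def cubeCenter (n : ℕ) (k : ℤ) (m : Fin (n + 1) → ℤ) : Fin (n + 1) → ℝ :=
  fun j => ((m j : ℝ) + 1 / 2) * 2 ^ (-k)

open Metric Topology

lemma Real.abs_mul_sign (r : ℝ) : |r| * Real.sign r = r := by
  rcases lt_trichotomy r 0 with h | rfl | h
  · rw [Real.sign_of_neg h, abs_of_neg h]; ring
  · simp
  · rw [Real.sign_of_pos h, abs_of_pos h]; ring

namespace ContinuousLinearMap

variable {ι : Type*} [Fintype ι] [DecidableEq ι]

lemma apply_eq_sum_mul_apply_single (L : (ι → ℝ) →L[ℝ] ℝ) (v : ι → ℝ) :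
    L v = ∑ i, v i * L (Pi.single i 1) := by
  conv_lhs => rw [pi_eq_sum_univ' v, map_sum]
  simp only [map_smul, smul_eq_mul]

lemma opNorm_le_sum_abs_apply_single (L : (ι → ℝ) →L[ℝ] ℝ) :
    ‖L‖ ≤ ∑ i, |L (Pi.single i 1)| := by
  refine L.opNorm_le_bound (by positivity) fun v => ?_
  rw [apply_eq_sum_mul_apply_single, Finset.sum_mul]
  refine (norm_sum_le _ _).trans (Finset.sum_le_sum fun i _ => ?_)
  rw [norm_mul, Real.norm_eq_abs, mul_comm]
  exact mul_le_mul_of_nonneg_left (norm_le_pi_norm v i) (abs_nonneg _)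

lemma mul_opNorm_le_apply_of_le_sign_mul (L : (ι → ℝ) →L[ℝ] ℝ) {v : ι → ℝ} {t : ℝ}
    (ht : 0 ≤ t) (hv : ∀ i, t ≤ Real.sign (L (Pi.single i 1)) * v i) : t * ‖L‖ ≤ L v := by
  calc t * ‖L‖ ≤ ∑ i, |L (Pi.single i 1)| * t := by
        rw [← Finset.sum_mul, mul_comm]
        exact mul_le_mul_of_nonneg_right L.opNorm_le_sum_abs_apply_single ht
    _ ≤ ∑ i, v i * L (Pi.single i 1) := Finset.sum_le_sum fun i _ => by
        calc |L (Pi.single i 1)| * t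
            ≤ |L (Pi.single i 1)| * (Real.sign (L (Pi.single i 1)) * v i) :=
              mul_le_mul_of_nonneg_left (hv i) (abs_nonneg _)
          _ = v i * L (Pi.single i 1) := by rw [← mul_assoc, Real.abs_mul_sign, mul_comm]
    _ = L v := (L.apply_eq_sum_mul_apply_single v).symm

end ContinuousLinearMap

lemma le_sub_of_sign_separated {ι : Type*} [Fintype ι] [DecidableEq ι] {f : (ι → ℝ) → ℝ}
    {s : Set (ι → ℝ)} (hs : Convex ℝ s) (hf : ∀ z ∈ s, DifferentiableAt ℝ f z)
    {x₀ c x y : ι → ℝ} {δ h : ℝ} (hδ : ∀ z ∈ s, ‖fderiv ℝ f z - fderiv ℝ f x₀‖ ≤ δ)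
    (hc : c ∈ s) (hx : x ∈ s) (hy : y ∈ s) (hxy : ‖x - y‖ ≤ h)
    (hsep : ∀ j, h / 2 ≤ Real.sign (fderiv ℝ f c (Pi.single j 1)) * (x j - y j)) :
    h * (‖fderiv ℝ f x₀‖ - 5 * δ) / 2 ≤ f x - f y := by
  set L := fderiv ℝ f c
  have hh : 0 ≤ h := (norm_nonneg _).trans hxy
  have hδ0 : 0 ≤ δ := (norm_nonneg _).trans (hδ c hc)
  have hLz : ∀ z ∈ s, ‖fderiv ℝ f z - L‖ ≤ 2 * δ := fun z hz => by
    calc ‖fderiv ℝ f z - L‖ = ‖(fderiv ℝ f z - fderiv ℝ f x₀) - (L - fderiv ℝ f x₀)‖ := by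
          congr 1; abel
      _ ≤ δ + δ := (norm_sub_le _ _).trans (add_le_add (hδ z hz) (hδ c hc))
      _ = 2 * δ := by ring
  have hmvt : |f x - f y - L (x - y)| ≤ 2 * δ * ‖x - y‖ :=
    hs.norm_image_sub_le_of_norm_fderiv_le' hf hLz hy hx
  have hLnorm : ‖fderiv ℝ f x₀‖ - δ ≤ ‖L‖ := by
    have := norm_sub_norm_le (fderiv ℝ f x₀) L
    rw [norm_sub_rev] at this
    linarith [hδ c hc]
  have hlin : h / 2 * ‖L‖ ≤ L (x - y) := L.mul_opNorm_le_apply_of_le_sign_mul (by positivity) hsep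
  have herr : 2 * δ * ‖x - y‖ ≤ 2 * δ * h := mul_le_mul_of_nonneg_left hxy (by positivity)
  nlinarith [abs_le.1 hmvt, mul_le_mul_of_nonneg_left hLnorm (show 0 ≤ h / 2 by positivity)]

lemma le_setAverage_abs_sub_setAverage {α : Type*} [MeasurableSpace α] {μ : Measure α}
    {f : α → ℝ} {A B : Set α} {c : ℝ} (hA₀ : μ A ≠ 0) (hA : μ A ≠ ∞) (hB₀ : μ B ≠ 0)
    (hB : μ B ≠ ∞) (hfA : IntegrableOn f A μ) (hfB : IntegrableOn f B μ)
    (h : ∀ x ∈ A, ∀ y ∈ B, c ≤ f x - f y) :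
    c ≤ ⨍ x in A, |f x - ⨍ y in B, f y ∂μ| ∂μ := by
  obtain ⟨y, hy, hfy⟩ := exists_setAverage_le hB₀ hB hfB
  obtain ⟨x, hx, hfx⟩ := exists_le_setAverage hA₀ hA
    ((hfA.sub (integrableOn_const hA)).abs (f := fun x => f x - ⨍ y in B, f y ∂μ))
  calc c ≤ f x - f y := h x hx y hy
    _ ≤ |f x - ⨍ y in B, f y ∂μ| := by linarith [le_abs_self (f x - ⨍ y in B, f y ∂μ)]
    _ ≤ _ := hfx

section DyadicCube

variable {n : ℕ} {k : ℤ} {m : Fin (n + 1) → ℤ}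

lemma dyadicCube_eq_pi (n : ℕ) (k : ℤ) (m : Fin (n + 1) → ℤ) :
    dyadicCube n k m =
      Set.pi Set.univ fun j => Set.Icc ((m j : ℝ) * 2 ^ (-k)) (((m j : ℝ) + 1) * 2 ^ (-k)) := by
  ext x
  simp only [dyadicCube, Set.mem_ofPred_eq, Set.mem_univ_pi, Set.mem_Icc]

lemma isCompact_dyadicCube : IsCompact (dyadicCube n k m) := by
  rw [dyadicCube_eq_pi]
  exact isCompact_univ_pi fun _ => isCompact_Icc

lemma volume_dyadicCube_ne_zero : volume (dyadicCube n k m) ≠ 0 := by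
  rw [dyadicCube_eq_pi, volume_pi_pi]
  refine Finset.prod_ne_zero_iff.2 fun j _ => ?_
  rw [Real.volume_Icc]
  simpa [add_mul] using zpow_pos (two_pos (α := ℝ)) (-k)

lemma dist_cubeCenter_le {x : Fin (n + 1) → ℝ} (hx : x ∈ dyadicCube n k m) :
    dist x (cubeCenter n k m) ≤ 2 ^ (-k) / 2 := by
  refine (dist_pi_le_iff (by positivity)).2 fun j => ?_
  rw [Real.dist_eq, abs_le, cubeCenter]
  constructor <;> linarith [hx j]

lemma dist_le_of_mem_dyadicCube {x y : Fin (n + 1) → ℝ} (hx : x ∈ dyadicCube n k m)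
    (hy : y ∈ dyadicCube n k m) : dist x y ≤ 2 ^ (-k) := by
  linarith [dist_triangle_right x y (cubeCenter n k m), dist_cubeCenter_le hx,
    dist_cubeCenter_le hy]

lemma dyadicCube_subset_closedBall {x₀ : Fin (n + 1) → ℝ} {r : ℝ}
    (hc : dist (cubeCenter n k m) x₀ < r / 2) (hk : (2 : ℝ) ^ (-k) < r) :
    dyadicCube n k m ⊆ closedBall x₀ r := fun x hx => by
  rw [mem_closedBall]
  linarith [dist_triangle x (cubeCenter n k m) x₀, dist_cubeCenter_le hx]

end DyadicCube

section BesselMeasure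

variable {n : ℕ} {lam : ℝ}

lemma measurableSet_upperHalfSpace : MeasurableSet {x : Fin (n + 1) → ℝ | 0 < x (Fin.last n)} :=
  measurableSet_lt measurable_const (measurable_pi_apply _)

lemma besselMeasurePi_ne_zero {s : Set (Fin (n + 1) → ℝ)}
    (hs : s ⊆ {x | 0 < x (Fin.last n)}) (h : volume s ≠ 0) : besselMeasurePi n lam s ≠ 0 := by
  have hset : {x | ENNReal.ofReal (x (Fin.last n) ^ (2 * lam)) ≠ 0} ∩ s ∩
      {x | 0 < x (Fin.last n)} = s := by
    refine Set.Subset.antisymm (fun x hx => hx.1.2) fun x hx => ⟨⟨?_, hx⟩, hs hx⟩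
    exact ENNReal.ofReal_ne_zero_iff.2 (Real.rpow_pos_of_pos (hs hx) _)
  rwa [besselMeasurePi, Ne, withDensity_apply_eq_zero'
    ((measurable_pi_apply _).pow_const _).ennreal_ofReal.aemeasurable,
    Measure.restrict_apply' measurableSet_upperHalfSpace, hset]

lemma besselMeasurePi_ne_top {K : Set (Fin (n + 1) → ℝ)} (hK : IsCompact K)
    (hKU : K ⊆ {x | 0 < x (Fin.last n)}) : besselMeasurePi n lam K ≠ ∞ := by
  have hdensity : IntegrableOn (fun x : Fin (n + 1) → ℝ => x (Fin.last n) ^ (2 * lam)) K :=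
    ContinuousOn.integrableOn_compact hK fun x hx =>
      ((continuous_apply _).continuousAt.rpow_const (Or.inl (hKU hx).ne')).continuousWithinAt
  rw [besselMeasurePi, withDensity_apply _ hK.measurableSet,
    Measure.restrict_restrict hK.measurableSet, Set.inter_eq_left.2 hKU]
  exact hdensity.lintegral_lt_top.ne

lemma integrableOn_besselMeasurePi {f : (Fin (n + 1) → ℝ) → ℝ} {K : Set (Fin (n + 1) → ℝ)}
    (hK : IsCompact K) (hKU : K ⊆ {x | 0 < x (Fin.last n)}) (hf : ContinuousOn f K) :
    IntegrableOn f K (besselMeasurePi n lam) :=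
  hf.integrableOn_of_subset_isCompact hK hK.measurableSet subset_rfl
    (besselMeasurePi_ne_top hK hKU)

end BesselMeasure

lemma exists_closedBall_subset_norm_fderiv_sub_le {E F : Type*} [NormedAddCommGroup E]
    [NormedSpace ℝ E] [NormedAddCommGroup F] [NormedSpace ℝ F] {f : E → F} {U : Set E}
    (hf : ContDiffOn ℝ 1 f U) (hU : IsOpen U) {x₀ : E} (hx₀ : x₀ ∈ U) {δ : ℝ} (hδ : 0 < δ) :
    ∃ r > 0, closedBall x₀ r ⊆ U ∧ ∀ z ∈ closedBall x₀ r, ‖fderiv ℝ f z - fderiv ℝ f x₀‖ ≤ δ := by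
  have hcont : ContinuousAt (fderiv ℝ f) x₀ :=
    (hf.continuousOn_fderiv_of_isOpen hU le_rfl).continuousAt (hU.mem_nhds hx₀)
  have hnear : ∀ᶠ z in 𝓝 x₀, z ∈ U ∧ ‖fderiv ℝ f z - fderiv ℝ f x₀‖ ≤ δ :=
    Filter.Eventually.and (hU.mem_nhds hx₀)
      ((hcont.eventually (closedBall_mem_nhds _ hδ)).mono fun z hz => by
        rwa [← dist_eq_norm])
  obtain ⟨r, hr, hball⟩ := nhds_basis_closedBall.mem_iff.1 hnear
  exact ⟨r, hr, fun z hz => (hball hz).1, fun z hz => (hball hz).2⟩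

lemma exists_two_zpow_neg_lt {r : ℝ} (hr : 0 < r) : ∃ N : ℤ, ∀ k > N, (2 : ℝ) ^ (-k) < r := by
  obtain ⟨N, hN⟩ := exists_pow_lt_of_lt_one hr (by norm_num : (1 / 2 : ℝ) < 1)
  refine ⟨N, fun k hk => lt_of_le_of_lt ?_ hN⟩
  rw [one_div, inv_pow, ← zpow_natCast, ← zpow_neg]
  exact zpow_le_zpow_right₀ one_le_two (by omega)

theorem stmt9_general (n : ℕ) (lam : ℝ)
    (f : (Fin (n + 1) → ℝ) → ℝ)
    (hf : ContDiffOn ℝ 2 f {x | 0 < x (Fin.last n)})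
    (x₀ : Fin (n + 1) → ℝ) (hx₀ : 0 < x₀ (Fin.last n))
    (hgrad : fderiv ℝ f x₀ ≠ 0) :
    ∃ (C ε : ℝ) (N : ℤ), 0 < C ∧ 0 < ε ∧
      ∀ k : ℤ, N < k → ∀ m : Fin (n + 1) → ℤ,
        dist (cubeCenter n k m) x₀ < ε →
        ∀ mA mB : Fin (n + 1) → ℤ,
          dyadicCube n (k + 2) mA ⊆ dyadicCube n k m →
          dyadicCube n (k + 2) mB ⊆ dyadicCube n k m →
          (∀ x ∈ dyadicCube n (k + 2) mA, ∀ y ∈ dyadicCube n (k + 2) mB, ∀ j,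
            (2 : ℝ) ^ (-k - 1) ≤
              Real.sign (fderiv ℝ f (cubeCenter n k m) (Pi.single j 1)) * (x j - y j)) →
          C * 2 ^ (-k) * ‖fderiv ℝ f x₀‖ ≤
            ⨍ x in dyadicCube n (k + 2) mA,
              |f x - ⨍ y in dyadicCube n (k + 2) mB, f y ∂(besselMeasurePi n lam)|
                ∂(besselMeasurePi n lam) := by
  have hU : IsOpen {x : Fin (n + 1) → ℝ | 0 < x (Fin.last n)} :=
    isOpen_lt continuous_const (continuous_apply _)
  have hG : 0 < ‖fderiv ℝ f x₀‖ := norm_pos_iff.2 hgrad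
  obtain ⟨r, hr, hballU, hclose⟩ := exists_closedBall_subset_norm_fderiv_sub_le
    (hf.of_le one_le_two) hU hx₀ (δ := ‖fderiv ℝ f x₀‖ / 16) (by positivity)
  obtain ⟨N, hN⟩ := exists_two_zpow_neg_lt hr
  refine ⟨1 / 4, r / 2, N, by norm_num, by positivity, ?_⟩
  intro k hk m hcenter mA mB hA hB hsep
  have hQ := dyadicCube_subset_closedBall hcenter (hN k hk)
  have hAU := (hA.trans hQ).trans hballU
  have hBU := (hB.trans hQ).trans hballU
  refine le_setAverage_abs_sub_setAverage (besselMeasurePi_ne_zero hAU volume_dyadicCube_ne_zero)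
    (besselMeasurePi_ne_top isCompact_dyadicCube hAU)
    (besselMeasurePi_ne_zero hBU volume_dyadicCube_ne_zero)
    (besselMeasurePi_ne_top isCompact_dyadicCube hBU)
    (integrableOn_besselMeasurePi isCompact_dyadicCube hAU (hf.continuousOn.mono hAU))
    (integrableOn_besselMeasurePi isCompact_dyadicCube hBU (hf.continuousOn.mono hBU))
    fun x hx y hy => ?_
  have hdiff : ∀ z ∈ closedBall x₀ r, DifferentiableAt ℝ f z := fun z hz =>
    (hf.contDiffAt (hU.mem_nhds (hballU hz))).differentiableAt two_ne_zero
  have hxy : ‖x - y‖ ≤ 2 ^ (-k) := by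
    rw [← dist_eq_norm]
    exact dist_le_of_mem_dyadicCube (hA hx) (hB hy)
  have hhalf : (2 : ℝ) ^ (-k - 1) = 2 ^ (-k) / 2 := by rw [zpow_sub_one₀ two_ne_zero]; ring
  have hgap := le_sub_of_sign_separated (convex_closedBall x₀ r) hdiff hclose
    (mem_closedBall.2 (by linarith)) (hQ (hA hx)) (hQ (hB hy)) hxy
    (fun j => hhalf ▸ hsep x hx y hy j)
  nlinarith [zpow_pos (two_pos (α := ℝ)) (-k)]

/-- if `f ∈ C²(ℝ₊^{n+1})` and `∇f(x₀) ≠ 0`, then there are `C, ε > 0` and `N` such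
that for every `k > N` and every dyadic cube `Q` of sidelength `2^{-k}` with center within `ε`
of `x₀`, any subcubes `A_Q, B_Q` of generation `k+2` of `Q` separated in the directions of the
signs of `∂_j f(c_Q)` satisfy
`⨍_{A_Q} |f - (f)_{B_Q}| dm_λ ≥ C 2^{-k} |∇f(x₀)|`. -/
theorem stmt9 (n : ℕ) (hn : 1 ≤ n) (lam : ℝ) (hlam : 0 < lam)
    (f : (Fin (n + 1) → ℝ) → ℝ)
    (hf : ContDiffOn ℝ 2 f {x | 0 < x (Fin.last n)})
    (x₀ : Fin (n + 1) → ℝ) (hx₀ : 0 < x₀ (Fin.last n))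
    (hgrad : fderiv ℝ f x₀ ≠ 0) :
    ∃ (C ε : ℝ) (N : ℤ), 0 < C ∧ 0 < ε ∧
      ∀ k : ℤ, N < k → ∀ m : Fin (n + 1) → ℤ,
        dist (cubeCenter n k m) x₀ < ε →
        ∀ mA mB : Fin (n + 1) → ℤ,
          dyadicCube n (k + 2) mA ⊆ dyadicCube n k m →
          dyadicCube n (k + 2) mB ⊆ dyadicCube n k m →
          (∀ x ∈ dyadicCube n (k + 2) mA, ∀ y ∈ dyadicCube n (k + 2) mB, ∀ j,
            (2 : ℝ) ^ (-k - 1) ≤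
              Real.sign (fderiv ℝ f (cubeCenter n k m) (Pi.single j 1)) * (x j - y j)) →
          C * 2 ^ (-k) * ‖fderiv ℝ f x₀‖ ≤
            ⨍ x in dyadicCube n (k + 2) mA,
              |f x - ⨍ y in dyadicCube n (k + 2) mB, f y ∂(besselMeasurePi n lam)|
                ∂(besselMeasurePi n lam) :=
  stmt9_general n lam f hf x₀ hx₀ hgrad
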